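/- Let G be a connected k-regular multigraph with |V(G)| ≥ 4. Then the restricted edge-connectivity λ'(G) is well-defined (a restricted edge-cut exists) and λ'(G) ≤ ξ(G), where ξ(G) = min{d(u)+d(v)−2μ(uv) : uv ∈ E(G)}. -/

import Mathlib

/-- A multigraph: multiple edges allowed (recorded as edge multiplicities), no loops. -/
structure Multigraph (V : Type*) where
  mult : V → V → ℕ
  symm : ∀ u v, mult u v = mult v u
  loopless : ∀ v, mult v v = 0

namespace Multigraph

variable {V : Type*}

/-- Adjacency: at least one edge between `u` and `v`. -/
def Adj (G : Multigraph V) (u v : V) : Prop := 0 < G.mult u v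

instance (G : Multigraph V) (v : V) : DecidablePred (G.Adj v) :=
  fun u => inferInstanceAs (Decidable (0 < G.mult v u))

/-- Reachability by walks. -/
def Reachable (G : Multigraph V) : V → V → Prop := Relation.ReflTransGen G.Adj

/-- A multigraph is connected if it is nonempty and every two vertices are joined by a walk. -/
def Connected (G : Multigraph V) : Prop := Nonempty V ∧ ∀ u v, G.Reachable u v

/-- An automorphism of a multigraph: a permutation preserving all edge multiplicities. -/
def Aut (G : Multigraph V) : Type _ :=
  {e : Equiv.Perm V // ∀ u v, G.mult (e u) (e v) = G.mult u v}

/-- A set of edges of `G`, given by sub-multiplicities. -/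
structure EdgeSub (G : Multigraph V) where
  f : V → V → ℕ
  symm : ∀ u v, f u v = f v u
  le : ∀ u v, f u v ≤ G.mult u v

/-- The multigraph obtained by deleting the edge set `F`. -/
def deleteEdges (G : Multigraph V) (F : G.EdgeSub) : Multigraph V where
  mult u v := G.mult u v - F.f u v
  symm u v := by rw [G.symm u v, F.symm u v]
  loopless v := by simp [G.loopless v]

/-- `F` is an edge-cut if removing it disconnects `G`. -/
def IsEdgeCut (G : Multigraph V) (F : G.EdgeSub) : Prop := ¬ (G.deleteEdges F).Connected

/-- `F` is a restricted edge-cut if removing it disconnects `G` and leaves no isolated vertex. -/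
def IsRestrictedEdgeCut (G : Multigraph V) (F : G.EdgeSub) : Prop :=
  G.IsEdgeCut F ∧ ∀ v, ∃ u, (G.deleteEdges F).Adj v u

/-- `G` is bipartite with parts `V₁`, `V₂`. -/
def IsBipartition [DecidableEq V] [Fintype V] (G : Multigraph V) (V₁ V₂ : Finset V) : Prop :=
  Disjoint V₁ V₂ ∧ V₁ ∪ V₂ = Finset.univ ∧ ∀ u v, G.Adj u v → (u ∈ V₁ ↔ v ∈ V₂)

/-- A bipartite multigraph is half-transitive if `Aut G` is transitive on each part. -/
def IsHalfTransitive [DecidableEq V] [Fintype V] (G : Multigraph V) (V₁ V₂ : Finset V) : Prop :=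
  G.IsBipartition V₁ V₂ ∧
  (∀ u ∈ V₁, ∀ v ∈ V₁, ∃ e : G.Aut, e.1 u = v) ∧
  (∀ u ∈ V₂, ∀ v ∈ V₂, ∃ e : G.Aut, e.1 u = v)

/-- An imprimitive block for `Aut G`. -/
def IsImprimitiveBlock [DecidableEq V] (G : Multigraph V) (A : Finset V) [Fintype V] : Prop :=
  A.Nonempty ∧ A ≠ Finset.univ ∧
  ∀ e : G.Aut, A.image e.1 = A ∨ Disjoint (A.image e.1) A

/-- The induced sub-multigraph on a vertex set `S`. -/
def induce (G : Multigraph V) (S : Finset V) : Multigraph {x // x ∈ S} where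
  mult a b := G.mult a.1 b.1
  symm a b := G.symm a.1 b.1
  loopless a := G.loopless a.1

section Fin

variable [Fintype V] [DecidableEq V]

/-- The degree of a vertex (counting multiplicities). -/
def degree (G : Multigraph V) (v : V) : ℕ := ∑ u, G.mult v u

/-- The minimum degree `δ(G)`. -/
noncomputable def minDegree (G : Multigraph V) : ℕ := sInf {n | ∃ v, G.degree v = n}

/-- The maximum edge multiplicity `μ(G)`. -/
def maxMult (G : Multigraph V) : ℕ := Finset.univ.sup fun p : V × V => G.mult p.1 p.2

/-- `d(A)`: the number of edges between `A` and its complement. -/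
def cut (G : Multigraph V) (A : Finset V) : ℕ := ∑ u ∈ A, ∑ v ∈ Aᶜ, G.mult u v

/-- The number of edges in an edge set. -/
def EdgeSub.card {G : Multigraph V} (F : G.EdgeSub) : ℕ := (∑ u, ∑ v, F.f u v) / 2

/-- The edge-boundary `N(A)` of a vertex set `A`, as an edge set. -/
def boundary (G : Multigraph V) (A : Finset V) : G.EdgeSub where
  f u v := if (u ∈ A ∧ v ∉ A) ∨ (v ∈ A ∧ u ∉ A) then G.mult u v else 0
  symm u v := by
    by_cases h1 : u ∈ A <;> by_cases h2 : v ∈ A <;> simp [h1, h2, G.symm u v]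
  le u v := by split_ifs <;> simp

/-- The edge-connectivity `λ(G)`. -/
noncomputable def edgeConn (G : Multigraph V) : ℕ :=
  sInf {n | ∃ F : G.EdgeSub, G.IsEdgeCut F ∧ F.card = n}

/-- The restricted edge-connectivity `λ'(G)`. -/
noncomputable def rEdgeConn (G : Multigraph V) : ℕ :=
  sInf {n | ∃ F : G.EdgeSub, G.IsRestrictedEdgeCut F ∧ F.card = n}

/-- The minimum edge degree `ξ(G) = min {d(u)+d(v)-2μ(uv) : uv ∈ E}`. -/
noncomputable def minEdgeDegree (G : Multigraph V) : ℕ :=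
  sInf {n | ∃ u v, G.Adj u v ∧ n = G.degree u + G.degree v - 2 * G.mult u v}

/-- A `λ`-fragment: a vertex set whose edge-boundary is a minimum edge-cut. -/
def IsFragment (G : Multigraph V) (A : Finset V) : Prop :=
  A.Nonempty ∧ Aᶜ.Nonempty ∧ G.IsEdgeCut (G.boundary A) ∧ G.cut A = G.edgeConn

/-- A `λ`-atom: a `λ`-fragment of minimum cardinality. -/
def IsAtom (G : Multigraph V) (A : Finset V) : Prop :=
  G.IsFragment A ∧ ∀ B : Finset V, G.IsFragment B → A.card ≤ B.card

/-- A strict `λ`-fragment: a `λ`-fragment `C` with `2 ≤ |C| ≤ |V| - 2`. -/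
def IsStrictFragment (G : Multigraph V) (A : Finset V) : Prop :=
  G.IsFragment A ∧ 2 ≤ A.card ∧ A.card ≤ Fintype.card V - 2

/-- A `λ`-superatom: a strict `λ`-fragment of minimum cardinality. -/
def IsSuperAtom (G : Multigraph V) (A : Finset V) : Prop :=
  G.IsStrictFragment A ∧ ∀ B : Finset V, G.IsStrictFragment B → A.card ≤ B.card

/-- A `λ'`-fragment: a vertex set whose edge-boundary is a minimum restricted edge-cut. -/
def IsRFragment (G : Multigraph V) (A : Finset V) : Prop :=
  G.IsRestrictedEdgeCut (G.boundary A) ∧ G.cut A = G.rEdgeConn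

/-- A `λ'`-atom: a `λ'`-fragment of minimum cardinality. -/
def IsRAtom (G : Multigraph V) (A : Finset V) : Prop :=
  G.IsRFragment A ∧ ∀ B : Finset V, G.IsRFragment B → A.card ≤ B.card

/-- `G` is super edge-connected if every minimum edge-cut is the set of all edges
incident with some vertex. -/
def IsSuperEdgeConnected (G : Multigraph V) : Prop :=
  ∀ F : G.EdgeSub, G.IsEdgeCut F → F.card = G.edgeConn →
    ∃ v : V, ∀ u w : V, F.f u w = if u = v ∨ w = v then G.mult u w else 0

end Fin

end Multigraph

variable {V : Type*} [Fintype V] [DecidableEq V]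

open Multigraph

/-!
Take an edge `uv` realising `ξ(G)`; the boundary of `{u, v}` has exactly `ξ(G)` edges. In a
regular multigraph minimising `d(u) + d(v) - 2μ(uv)` means maximising `μ(uv)`. A vertex
`w ∉ {u, v}` all of whose edges go to `u` and `v` would then force `u` and `v` to have no
neighbours outside `{u, v, w}`, so `{u, v, w}` would be a component, impossible on at least four
vertices. Hence the boundary of `{u, v}` is a restricted edge-cut.
-/

namespace Multigraph

variable {G : Multigraph V}

section

omit [Fintype V] [DecidableEq V]

theorem Adj.ne {u v : V} (h : G.Adj u v) : u ≠ v := by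
  rintro rfl
  exact (G.loopless u).not_gt h

theorem Adj.symm {u v : V} (h : G.Adj u v) : G.Adj v u := by
  rwa [Adj, G.symm]

end

omit [Fintype V] in
theorem deleteEdges_boundary_mult (G : Multigraph V) (A : Finset V) (a b : V) :
    (G.deleteEdges (G.boundary A)).mult a b = if (a ∈ A ↔ b ∈ A) then G.mult a b else 0 := by
  by_cases ha : a ∈ A <;> by_cases hb : b ∈ A <;> simp [deleteEdges, boundary, ha, hb]

section

omit [DecidableEq V]

theorem mult_le_degree (G : Multigraph V) (a b : V) : G.mult a b ≤ G.degree a :=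
  Finset.single_le_sum (fun _ _ => Nat.zero_le _) (Finset.mem_univ b)

theorem Connected.exists_adj (hG : G.Connected) (hV : 2 ≤ Fintype.card V) :
    ∃ u v, G.Adj u v := by
  obtain ⟨x, y, hxy⟩ := Fintype.exists_pair_of_one_lt_card hV
  rcases (hG.2 x y).cases_head with rfl | ⟨z, hxz, -⟩
  · exact absurd rfl hxy
  · exact ⟨x, z, hxz⟩

theorem Connected.eq_univ_of_adj_closed (hG : G.Connected) {S : Finset V} (hne : S.Nonempty)
    (hS : ∀ a b, a ∈ S → G.Adj a b → b ∈ S) : S = Finset.univ := by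
  obtain ⟨a, ha⟩ := hne
  refine Finset.eq_univ_of_forall fun b => ?_
  induction hG.2 a b with
  | refl => exact ha
  | tail _ hadj ih => exact hS _ _ ih hadj

theorem rEdgeConn_le_card {F : G.EdgeSub} (hF : G.IsRestrictedEdgeCut F) :
    G.rEdgeConn ≤ F.card :=
  Nat.sInf_le ⟨F, hF, rfl⟩

theorem exists_minEdgeDegree_eq (h : ∃ u v, G.Adj u v) :
    ∃ u v, G.Adj u v ∧ G.minEdgeDegree = G.degree u + G.degree v - 2 * G.mult u v :=
  Nat.sInf_mem (s := {n | ∃ u v, G.Adj u v ∧ n = G.degree u + G.degree v - 2 * G.mult u v})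
    (by obtain ⟨u, v, huv⟩ := h; exact ⟨_, u, v, huv, rfl⟩)

theorem minEdgeDegree_le {u v : V} (huv : G.Adj u v) :
    G.minEdgeDegree ≤ G.degree u + G.degree v - 2 * G.mult u v :=
  Nat.sInf_le ⟨u, v, huv, rfl⟩

theorem mult_le_of_minEdgeDegree_eq {k : ℕ} (hreg : ∀ v, G.degree v = k) {u v : V}
    (hξ : G.minEdgeDegree = G.degree u + G.degree v - 2 * G.mult u v) (a b : V) :
    G.mult a b ≤ G.mult u v := by
  rcases Nat.eq_zero_or_pos (G.mult a b) with h0 | hab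
  · omega
  have := minEdgeDegree_le hab
  have := G.mult_le_degree a b
  have := G.mult_le_degree u v
  simp only [hreg] at *
  omega

end

theorem degree_eq_mult_add_mult_add_sum_compl (G : Multigraph V) (a : V) {b c : V}
    (hbc : b ≠ c) :
    G.degree a = G.mult a b + G.mult a c + ∑ x ∈ ({b, c} : Finset V)ᶜ, G.mult a x := by
  rw [degree, ← Finset.sum_add_sum_compl {b, c}, Finset.sum_pair hbc]

theorem mult_eq_zero_of_degree_le_mult_add_mult {a b c x : V} (hbc : b ≠ c)
    (h : G.degree a ≤ G.mult a b + G.mult a c) (hx : x ∉ ({b, c} : Finset V)) :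
    G.mult a x = 0 := by
  have hsum := G.degree_eq_mult_add_mult_add_sum_compl a hbc
  exact Finset.sum_eq_zero_iff.mp (by omega) x (Finset.mem_compl.mpr hx)

theorem cut_pair (G : Multigraph V) {u v : V} (huv : u ≠ v) :
    G.cut {u, v} = G.degree u + G.degree v - 2 * G.mult u v := by
  have hu := G.degree_eq_mult_add_mult_add_sum_compl u huv
  have hv := G.degree_eq_mult_add_mult_add_sum_compl v huv
  rw [G.loopless u] at hu
  rw [G.loopless v, G.symm v u] at hv
  rw [cut, Finset.sum_pair huv]
  omega

theorem sum_sum_boundary (G : Multigraph V) (A : Finset V) :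
    ∑ a, ∑ b, (G.boundary A).f a b = 2 * G.cut A := by
  have hin : ∀ a ∈ A, ∑ b, (G.boundary A).f a b = ∑ b ∈ Aᶜ, G.mult a b := fun a ha => by
    simp [boundary, ha, Finset.sum_ite, Finset.filter_not, ← Finset.compl_eq_univ_sdiff]
  have hout : ∀ a ∈ Aᶜ, ∑ b, (G.boundary A).f a b = ∑ b ∈ A, G.mult b a := fun a ha => by
    simp_all [boundary, Finset.sum_ite, G.symm a]
  rw [← Finset.sum_add_sum_compl A, Finset.sum_congr rfl hin, Finset.sum_congr rfl hout,
    Finset.sum_comm (s := Aᶜ), ← cut]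
  omega

theorem card_boundary (G : Multigraph V) (A : Finset V) : (G.boundary A).card = G.cut A := by
  rw [EdgeSub.card, sum_sum_boundary]
  omega

theorem isEdgeCut_boundary {A : Finset V} (hne : A.Nonempty) (huniv : A ≠ Finset.univ) :
    G.IsEdgeCut (G.boundary A) := fun hconn =>
  huniv <| hconn.eq_univ_of_adj_closed hne fun a b ha hab => by
    by_contra hb
    simp [Adj, deleteEdges_boundary_mult, ha, hb] at hab

theorem isRestrictedEdgeCut_boundary {A : Finset V} (hne : A.Nonempty) (huniv : A ≠ Finset.univ)
    (hside : ∀ a, ∃ b, (a ∈ A ↔ b ∈ A) ∧ G.Adj a b) :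
    G.IsRestrictedEdgeCut (G.boundary A) := by
  refine ⟨isEdgeCut_boundary hne huniv, fun a => ?_⟩
  obtain ⟨b, hab, hadj⟩ := hside a
  exact ⟨b, by simpa [Adj, deleteEdges_boundary_mult, hab] using hadj⟩

theorem exists_adj_not_mem_pair {k : ℕ} (hreg : ∀ v, G.degree v = k) (hG : G.Connected)
    (h4 : 4 ≤ Fintype.card V) {u v : V} (huv : u ≠ v) (hmax : ∀ a b, G.mult a b ≤ G.mult u v)
    {w : V} (hw : w ∉ ({u, v} : Finset V)) : ∃ x ∉ ({u, v} : Finset V), G.Adj w x := by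
  by_contra! hiso
  have hwu : w ≠ u := by rintro rfl; simp at hw
  have hwv : w ≠ v := by rintro rfl; simp at hw
  have hdw : G.degree w = G.mult w u + G.mult w v := by
    have hsum := G.degree_eq_mult_add_mult_add_sum_compl w huv
    have hzero : ∑ x ∈ ({u, v} : Finset V)ᶜ, G.mult w x = 0 := Finset.sum_eq_zero fun x hx => by
      simpa [Adj] using hiso x (Finset.mem_compl.mp hx)
    omega
  -- `d(u) = d(w) = μ(wu) + μ(wv) ≤ μ(uw) + μ(uv)`, and symmetrically for `v`.
  have hu : ∀ x ∉ ({v, w} : Finset V), G.mult u x = 0 := fun x =>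
    mult_eq_zero_of_degree_le_mult_add_mult hwv.symm <| by
      have := hmax w v
      rw [hreg u, ← hreg w, hdw, G.symm u w]
      omega
  have hv : ∀ x ∉ ({u, w} : Finset V), G.mult v x = 0 := fun x =>
    mult_eq_zero_of_degree_le_mult_add_mult hwu.symm <| by
      have := hmax w u
      rw [hreg v, ← hreg w, hdw, G.symm v u, G.symm v w]
      omega
  have hclosed : ∀ a b, a ∈ ({u, v, w} : Finset V) → G.Adj a b → b ∈ ({u, v, w} : Finset V) := by
    intro a b ha hab
    by_contra hb
    simp only [Finset.mem_insert, Finset.mem_singleton, not_or] at ha hb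
    rcases ha with rfl | rfl | rfl
    · exact hab.ne' (hu b (by simp [hb.2.1, hb.2.2]))
    · exact hab.ne' (hv b (by simp [hb.1, hb.2.2]))
    · exact hiso b (by simp [hb.1, hb.2.1]) hab
  have huniv := hG.eq_univ_of_adj_closed (by simp) hclosed
  have : Fintype.card V ≤ 3 := by
    rw [← Finset.card_univ, ← huniv]
    exact Finset.card_le_three
  omega

theorem isRestrictedEdgeCut_boundary_pair {k : ℕ} (hreg : ∀ v, G.degree v = k)
    (hG : G.Connected) (h4 : 4 ≤ Fintype.card V) {u v : V} (huv : G.Adj u v)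
    (hmax : ∀ a b, G.mult a b ≤ G.mult u v) :
    G.IsRestrictedEdgeCut (G.boundary {u, v}) := by
  refine isRestrictedEdgeCut_boundary (by simp) (fun huniv => ?_) fun a => ?_
  · have : Fintype.card V ≤ 2 := by
      rw [← Finset.card_univ, ← huniv]
      exact Finset.card_le_two
    omega
  by_cases ha : a ∈ ({u, v} : Finset V)
  · rcases Finset.mem_insert.mp ha with rfl | ha
    · exact ⟨v, by simp, huv⟩
    rcases Finset.mem_singleton.mp ha with rfl
    exact ⟨u, by simp, huv.symm⟩
  · obtain ⟨b, hb, hab⟩ := exists_adj_not_mem_pair hreg hG h4 huv.ne hmax ha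
    exact ⟨b, iff_of_false ha hb, hab⟩

end Multigraph

/-- For a connected `k`-regular multigraph on at least four vertices, a restricted edge-cut
exists and `λ'(G) ≤ ξ(G)`. -/
theorem rEdgeConn_le_minEdgeDegree_of_regular (G : Multigraph V) (k : ℕ)
    (hreg : ∀ v : V, G.degree v = k) (hG : G.Connected) (h4 : 4 ≤ Fintype.card V) :
    (∃ F : G.EdgeSub, G.IsRestrictedEdgeCut F) ∧ G.rEdgeConn ≤ G.minEdgeDegree := by
  obtain ⟨u, v, huv, hξ⟩ := exists_minEdgeDegree_eq (hG.exists_adj (by omega))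
  have hcut := isRestrictedEdgeCut_boundary_pair hreg hG h4 huv
    (mult_le_of_minEdgeDegree_eq hreg hξ)
  refine ⟨⟨_, hcut⟩, ?_⟩
  calc G.rEdgeConn ≤ (G.boundary {u, v}).card := rEdgeConn_le_card hcut
    _ = G.minEdgeDegree := by rw [card_boundary, cut_pair G huv.ne, hξ]
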